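/- arXiv:2107.09945 — 2 statements merged into one kernel-verified Lean document; each statement's English description precedes it below -/
import Mathlib

section
/- For every ordinal θ > 1, a subset S of C^ω belongs to Λ_θ if and only if there exists a family of sets (S_i)_{i∈I} forming an open union with S = ⩁_{i∈I} S_i and such that for each i there exists an ordinal θ_i with 1 ≤ θ_i < θ and S_i ∈ K_{θ_i}. -/
open Set Topology

noncomputable section

def seqTop (C : Type) : TopologicalSpace (ℕ → C) :=
  @Pi.topologicalSpace ℕ (fun _ => C) (fun _ => ⊥)

def pref {C : Type} (ρ : ℕ → C) (n : ℕ) : List C :=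
  (List.range n).map ρ

def OrdEven (θ : Ordinal) : Prop :=
  ∃ (lam : Ordinal) (k : ℕ), (lam = 0 ∨ Order.IsSuccLimit lam) ∧ θ = lam + 2 * (k : Ordinal)

def HDiffSet {C : Type} (θ : Ordinal) (O : Ordinal → Set (ℕ → C)) : Set (ℕ → C) :=
  {ρ | (∃ η < θ, ρ ∈ O η) ∧ (OrdEven (sInf {η | η < θ ∧ ρ ∈ O η}) ↔ ¬ OrdEven θ)}

def Dclass (C : Type) (θ : Ordinal) : Set (Set (ℕ → C)) :=
  {S | ∃ O : Ordinal → Set (ℕ → C),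
      (∀ η < θ, IsOpen[seqTop C] (O η)) ∧
      (∀ η₁ η₂, η₁ ≤ η₂ → η₂ < θ → O η₁ ⊆ O η₂) ∧
      S = HDiffSet θ O}

def FineLambda (C : Type) : Ordinal → Set (Set (ℕ → C))
  | θ =>
    if θ = 1 then {S | IsOpen[seqTop C] S}
    else if 1 < θ then
      {S | ∃ (I : Type) (T O : I → Set (ℕ → C)) (η : I → {x : Ordinal // x < θ}),
        (∀ i, IsOpen[seqTop C] (O i)) ∧ (Pairwise fun i j => Disjoint (O i) (O j)) ∧
        (∀ i, T i ⊆ O i) ∧ S = ⋃ i, T i ∧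
        ∀ i, T i ∈ FineLambda C (η i) ∨ (T i)ᶜ ∈ FineLambda C (η i)}
    else ∅
termination_by θ => θ
decreasing_by all_goals exact (η i).2

def FineK (C : Type) (θ : Ordinal) : Set (Set (ℕ → C)) :=
  {S | Sᶜ ∈ FineLambda C θ}

open Function PiNat

/-!
Every set in `K_ζ` with `1 ≤ ζ < θ` is one of the generators of `Λ_θ`, which gives one direction.
For the other, an open union of open unions is again an open union: intersect the separating
open sets of each inner union with the one of the outer union. So, by induction on the level, each
generator in `Λ_η` (`η < θ`) can be unfolded into an open union of sets from the classes `K_ζ`.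
The induction bottoms out at the open sets, and an open set `U ⊆ C^ω` is the disjoint union of the
clopen sets `D_n` of points `x` for which `n` is the least length of a cylinder around `x` inside
`U`; this makes `U` an open union of closed sets, i.e. of sets from `K_1`.
-/

section OpenUnions

variable {X : Type*} [TopologicalSpace X]

/-- `S ∈ openUnions 𝒦` says that `S = ⩁ i, T i` for some family of sets `T i ∈ 𝒦`. -/
def openUnions (𝒦 : Set (Set X)) : Set (Set X) :=
  {S | ∃ (I : Type) (T O : I → Set X), (∀ i, IsOpen (O i)) ∧
    (Pairwise fun i j => Disjoint (O i) (O j)) ∧ (∀ i, T i ⊆ O i) ∧ S = ⋃ i, T i ∧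
    ∀ i, T i ∈ 𝒦}

lemma subset_openUnions (𝒦 : Set (Set X)) : 𝒦 ⊆ openUnions 𝒦 := fun S hS =>
  ⟨Unit, fun _ => S, fun _ => univ, fun _ => isOpen_univ, Subsingleton.pairwise,
    fun _ => subset_univ S, (iUnion_const S).symm, fun _ => hS⟩

lemma openUnions_mono {𝒦 𝒦' : Set (Set X)} (h : 𝒦 ⊆ 𝒦') : openUnions 𝒦 ⊆ openUnions 𝒦' :=
  fun _ ⟨I, T, O, hO, hdisj, hTO, hS, hT⟩ => ⟨I, T, O, hO, hdisj, hTO, hS, fun i => h (hT i)⟩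

lemma openUnions_openUnions_subset (𝒦 : Set (Set X)) :
    openUnions (openUnions 𝒦) ⊆ openUnions 𝒦 := by
  rintro S ⟨I, T, O, hO, hdisj, hTO, rfl, hT⟩
  choose J T' O' hO' hdisj' hTO' hT_eq hT' using hT
  refine ⟨Σ i, J i, fun p => T' p.1 p.2, fun p => O p.1 ∩ O' p.1 p.2,
    fun p => (hO p.1).inter (hO' p.1 p.2), ?_, fun p => ?_, ?_, fun p => hT' p.1 p.2⟩
  · rintro ⟨i, j⟩ ⟨i', j'⟩ hne
    rcases eq_or_ne i i' with rfl | hi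
    · have hj : j ≠ j' := fun h => hne (congrArg (Sigma.mk i) h)
      exact (hdisj' i hj).mono inter_subset_right inter_subset_right
    · exact (hdisj hi).mono inter_subset_left inter_subset_left
  · refine subset_inter ((subset_iUnion _ p.2).trans ?_) (hTO' p.1 p.2)
    exact (hT_eq p.1).superset.trans (hTO p.1)
  · rw [iUnion_sigma]
    exact iUnion_congr hT_eq

end OpenUnions

section Cylinders

variable {E : ℕ → Type*} [∀ n, TopologicalSpace (E n)] [∀ n, DiscreteTopology (E n)]

lemma isClopen_of_cylinder_subset {s : Set (∀ n, E n)} (n : ℕ)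
    (hs : ∀ x ∈ s, cylinder x n ⊆ s) : IsClopen s := by
  have hnhds (x : ∀ n, E n) : cylinder x n ∈ 𝓝 x :=
    (isOpen_cylinder E x n).mem_nhds (self_mem_cylinder x n)
  refine ⟨isOpen_compl_iff.mp <| isOpen_iff_mem_nhds.mpr fun x hx => ?_,
    isOpen_iff_mem_nhds.mpr fun x hx => Filter.mem_of_superset (hnhds x) (hs x hx)⟩
  exact Filter.mem_of_superset (hnhds x) fun y hy hys =>
    hx (hs y hys ((mem_cylinder_comm x y n).mp hy))

lemma isClopen_setOf_cylinder_subset (U : Set (∀ n, E n)) (n : ℕ) :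
    IsClopen {x | cylinder x n ⊆ U} :=
  isClopen_of_cylinder_subset n fun _ hx _ hy => (mem_cylinder_iff_eq.mp hy).trans_subset hx

lemma IsOpen.iUnion_setOf_cylinder_subset {U : Set (∀ n, E n)} (hU : IsOpen U) :
    ⋃ n, {x | cylinder x n ⊆ U} = U := by
  refine Subset.antisymm (iUnion_subset fun n x hx => hx (self_mem_cylinder x n)) fun x hx => ?_
  obtain ⟨_, ⟨y, n, rfl⟩, hxy, hyU⟩ :=
    (isTopologicalBasis_cylinders E).exists_subset_of_mem_open hx hU
  exact mem_iUnion.mpr ⟨n, (mem_cylinder_iff_eq.mp hxy).trans_subset hyU⟩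

lemma IsOpen.exists_pairwise_disjoint_isClopen {U : Set (∀ n, E n)} (hU : IsOpen U) :
    ∃ D : ℕ → Set (∀ n, E n), (∀ n, IsClopen (D n)) ∧ Pairwise (Disjoint on D) ∧
      ⋃ n, D n = U :=
  ⟨disjointed fun n => {x | cylinder x n ⊆ U},
    fun n => Nat.disjointedRec (fun _ _ ht => ht.diff (isClopen_setOf_cylinder_subset U _))
      (isClopen_setOf_cylinder_subset U n),
    disjoint_disjointed _, iUnion_disjointed.trans hU.iUnion_setOf_cylinder_subset⟩

lemma IsOpen.mem_openUnions_isClosed {U : Set (∀ n, E n)} (hU : IsOpen U) :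
    U ∈ openUnions {A | IsClosed A} :=
  let ⟨D, hD, hdisj, hDU⟩ := hU.exists_pairwise_disjoint_isClopen
  ⟨ℕ, D, D, fun n => (hD n).isOpen, hdisj, fun _ => subset_rfl, hDU.symm, fun n => (hD n).isClosed⟩

end Cylinders

section FineHierarchy

variable {C : Type}

-- With this instance the product topology on `ℕ → C` is `seqTop C` by definition.
local instance : TopologicalSpace C := ⊥

local instance : DiscreteTopology C := ⟨rfl⟩

lemma fineLambda_zero : FineLambda C 0 = ∅ := by
  rw [FineLambda]
  simp

lemma fineLambda_one : FineLambda C 1 = {S | IsOpen S} := by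
  rw [FineLambda, if_pos rfl]
  rfl

lemma fineLambda_of_one_lt {θ : Ordinal} (hθ : 1 < θ) :
    FineLambda C θ = openUnions {T | ∃ η < θ, T ∈ FineLambda C η ∨ Tᶜ ∈ FineLambda C η} := by
  rw [FineLambda, if_neg hθ.ne', if_pos hθ]
  ext S
  constructor
  · rintro ⟨I, T, O, η, hO, hdisj, hTO, hS, hT⟩
    exact ⟨I, T, O, hO, hdisj, hTO, hS, fun i => ⟨η i, (η i).2, hT i⟩⟩
  · rintro ⟨I, T, O, hO, hdisj, hTO, hS, hT⟩
    choose η hη hT using hT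
    exact ⟨I, T, O, fun i => ⟨η i, hη i⟩, hO, hdisj, hTO, hS, hT⟩

lemma one_le_of_mem_fineLambda {η : Ordinal} {S : Set (ℕ → C)} (h : S ∈ FineLambda C η) :
    1 ≤ η :=
  Order.one_le_iff_ne_zero.mpr fun h0 => by rwa [h0, fineLambda_zero] at h

lemma isClosed_mem_fineK_one {A : Set (ℕ → C)} (hA : IsClosed A) : A ∈ FineK C 1 := by
  show Aᶜ ∈ FineLambda C 1
  rw [fineLambda_one]
  exact hA.isOpen_compl

def fineKBelow (C : Type) (θ : Ordinal) : Set (Set (ℕ → C)) :=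
  {T | ∃ ζ, 1 ≤ ζ ∧ ζ < θ ∧ T ∈ FineK C ζ}

lemma fineLambda_subset_openUnions_fineKBelow {θ η : Ordinal} (hθ : 1 < θ) (hη : η ≤ θ) :
    FineLambda C η ⊆ openUnions (fineKBelow C θ) := by
  induction η using WellFoundedLT.induction with
  | ind η ih =>
  rcases lt_trichotomy η 1 with hη0 | rfl | hη1
  · rw [Order.lt_one_iff.mp hη0, fineLambda_zero]
    exact empty_subset _
  · rw [fineLambda_one]
    refine fun U hU => openUnions_mono (fun A hA => ?_) (IsOpen.mem_openUnions_isClosed hU)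
    exact ⟨1, le_rfl, hθ, isClosed_mem_fineK_one hA⟩
  · rw [fineLambda_of_one_lt hη1]
    refine (openUnions_mono ?_).trans (openUnions_openUnions_subset _)
    rintro T ⟨ζ, hζ, hT | hT⟩
    · exact ih ζ hζ (hζ.le.trans hη) hT
    · exact subset_openUnions _ ⟨ζ, one_le_of_mem_fineLambda hT, hζ.trans_le hη, hT⟩

lemma mem_fineLambda_iff {θ : Ordinal} (hθ : 1 < θ) {S : Set (ℕ → C)} :
    S ∈ FineLambda C θ ↔ S ∈ openUnions (fineKBelow C θ) := by
  refine ⟨fun hS => fineLambda_subset_openUnions_fineKBelow hθ le_rfl hS, fun hS => ?_⟩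
  rw [fineLambda_of_one_lt hθ]
  refine openUnions_mono (fun T hT => ?_) hS
  obtain ⟨ζ, -, hζ, hT⟩ := hT
  exact ⟨ζ, hζ, Or.inr hT⟩

end FineHierarchy

/-- For `θ > 1`, a set belongs to `Λ_θ` iff it is an open union of sets belonging to
`K_{θ_i}` for ordinals `1 ≤ θ_i < θ`. -/
theorem statement15 (C : Type) (θ : Ordinal) (hθ : 1 < θ) (S : Set (ℕ → C)) :
    S ∈ FineLambda C θ ↔
      ∃ (I : Type) (T O : I → Set (ℕ → C)),
        (∀ i, IsOpen[seqTop C] (O i)) ∧ (Pairwise fun i j => Disjoint (O i) (O j)) ∧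
        (∀ i, T i ⊆ O i) ∧ S = ⋃ i, T i ∧
        ∀ i, ∃ θi : Ordinal, 1 ≤ θi ∧ θi < θ ∧ T i ∈ FineK C θi :=
  mem_fineLambda_iff hθ
end
end

section
/- For every limit ordinal θ, a subset S of C^ω belongs to 𝒟_θ if and only if S can be written as an open union S = ⩁_{i∈I} S_i where for each i there exists a nonzero ordinal θ_i < θ with S_i ∈ 𝒟_{θ_i}. -/
open Set Topology

noncomputable section

/-!
Forward direction: `C^ω` is zero-dimensional, so the open cover `(O η)_{η<θ}` is refined by a
partition into minimal cylinders. On a cylinder `W ⊆ O η` every point enters the family at an index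
`≤ η`, so `S ∩ W` is the difference set of `(O ξ ∩ W)_ξ` truncated at any `θ' ∈ (η, θ)` of the same
parity as `θ`; such `θ'` exist because `θ` is a limit.

Backward direction: `𝒟_{θ'} ⊆ 𝒟_θ` for `θ' ≤ θ`, delaying the family by one step when the parities
of `θ'` and `θ` differ, and membership in a difference set is decided pointwise, so `𝒟_θ` sets
living in pairwise disjoint open sets can be glued.
-/

open Ordinal PiNat

lemma ordEven_omega0_mul_add_natCast (c : Ordinal) (n : ℕ) : OrdEven (ω * c + n) ↔ Even n := by
  constructor
  · rintro ⟨lam, k, hlam, h⟩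
    obtain ⟨d, rfl⟩ : ω ∣ lam := by
      rcases hlam with rfl | hlam
      · exact dvd_zero ω
      · exact isSuccPrelimit_iff_omega0_dvd.1 hlam.isSuccPrelimit
    rw [show (2 : Ordinal) * k = ((2 * k : ℕ) : Ordinal) by norm_cast] at h
    have hmod := congrArg (· % ω) h
    simp only [mul_add_mod_self, mod_eq_of_lt (natCast_lt_omega0 _), Nat.cast_inj] at hmod
    exact hmod ▸ even_two_mul k
  · rintro ⟨k, rfl⟩
    refine ⟨ω * c, k, ?_, by rw [← two_mul]; push_cast; rfl⟩
    rcases eq_or_ne (ω * c) 0 with h | h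
    · exact .inl h
    · exact .inr ((Order.isSuccLimit_iff _).2 ⟨by simpa [isMin_iff_eq_bot] using h,
        isSuccPrelimit_iff_omega0_dvd.2 (dvd_mul_right ω c)⟩)

lemma exists_eq_omega0_mul_add_natCast (θ : Ordinal) : ∃ (c : Ordinal) (n : ℕ), θ = ω * c + n := by
  obtain ⟨n, hn⟩ := lt_omega0.1 (mod_lt θ omega0_ne_zero)
  exact ⟨θ / ω, n, by rw [← hn, div_add_mod]⟩

lemma ordEven_add_one (θ : Ordinal) : OrdEven (θ + 1) ↔ ¬ OrdEven θ := by
  obtain ⟨c, n, rfl⟩ := exists_eq_omega0_mul_add_natCast θ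
  rw [add_assoc, ← Nat.cast_add_one, ordEven_omega0_mul_add_natCast,
    ordEven_omega0_mul_add_natCast, Nat.even_add_one]

lemma Order.IsSuccLimit.ordEven {θ : Ordinal} (hθ : Order.IsSuccLimit θ) : OrdEven θ :=
  ⟨θ, 0, .inr hθ, by simp⟩

lemma Order.IsSuccLimit.exists_ordEven_between {θ η : Ordinal} (hθ : Order.IsSuccLimit θ)
    (hη : η < θ) : ∃ θ', OrdEven θ' ∧ η < θ' ∧ θ' < θ := by
  have hη₁ : η + 1 < θ := hθ.add_one_lt hη
  by_cases h : OrdEven (η + 1)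
  · exact ⟨η + 1, h, lt_add_one η, hη₁⟩
  · exact ⟨η + 1 + 1, (ordEven_add_one _).2 h, (lt_add_one η).trans (lt_add_one _),
      hθ.add_one_lt hη₁⟩

lemma exists_parity_shift {θ' θ : Ordinal} (h : θ' ≤ θ) : ∃ s : Ordinal,
    (∀ ξ < θ', ξ + s < θ) ∧ ∀ β, (OrdEven (β + s) ↔ ¬ OrdEven θ) ↔ (OrdEven β ↔ ¬ OrdEven θ') := by
  by_cases hpar : OrdEven θ' ↔ OrdEven θ
  · exact ⟨0, fun ξ hξ => by simpa using hξ.trans_le h, fun β => by simp [hpar]⟩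
  · have hlt : θ' < θ := h.lt_of_ne fun h => hpar (h ▸ Iff.rfl)
    refine ⟨1, fun ξ hξ => (Order.add_one_le_of_lt hξ).trans_lt hlt, fun β => ?_⟩
    rw [ordEven_add_one]
    tauto

lemma sInf_setOf_lt_and_eq {θ : Ordinal} {p : Ordinal → Prop} (h : ∃ η < θ, p η) :
    sInf {η | η < θ ∧ p η} = sInf {η | p η} := by
  obtain ⟨η, hηθ, hη⟩ := h
  have hmin : sInf {η | p η} ∈ {η | η < θ ∧ p η} :=
    ⟨(csInf_le' hη).trans_lt hηθ, csInf_mem ⟨η, hη⟩⟩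
  exact le_antisymm (csInf_le' hmin) (csInf_le_csInf' ⟨_, hmin⟩ fun _ h => h.2)

lemma sInf_setOf_exists_add_le {p : Ordinal → Prop} (h : ∃ ξ, p ξ) (s : Ordinal) :
    sInf {η | ∃ ξ, p ξ ∧ ξ + s ≤ η} = sInf {ξ | p ξ} + s :=
  le_antisymm (csInf_le' ⟨_, csInf_mem h, le_rfl⟩)
    (le_csInf ⟨_, _, h.choose_spec, le_rfl⟩ fun _ ⟨_, hξ, hle⟩ =>
      (add_le_add_left (csInf_le' hξ) s).trans hle)

section HDiffSet

variable {C : Type}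

lemma mem_hDiffSet_iff {θ : Ordinal} {O : Ordinal → Set (ℕ → C)} {ρ : ℕ → C} :
    ρ ∈ HDiffSet θ O ↔ (∃ η < θ, ρ ∈ O η) ∧ (OrdEven (sInf {η | ρ ∈ O η}) ↔ ¬ OrdEven θ) := by
  refine and_congr_right fun h => ?_
  rw [sInf_setOf_lt_and_eq h]

lemma hDiffSet_inter_eq {θ θ' η : Ordinal} {O : Ordinal → Set (ℕ → C)} {W : Set (ℕ → C)}
    (hW : W ⊆ O η) (hη : η < θ') (hθ' : θ' ≤ θ) (hpar : OrdEven θ' ↔ OrdEven θ) :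
    HDiffSet θ O ∩ W = HDiffSet θ' (fun ξ => O ξ ∩ W) := by
  ext ρ
  by_cases hρ : ρ ∈ W
  · simp only [mem_inter_iff, hρ, and_true, mem_hDiffSet_iff, hpar]
    exact and_congr_left fun _ =>
      ⟨fun _ => ⟨η, hη, hW hρ⟩, fun ⟨ξ, hξ, h⟩ => ⟨ξ, hξ.trans_le hθ', h⟩⟩
  · simp [hρ, mem_hDiffSet_iff]

end HDiffSet

section Cylinders

variable {C : Type}

lemma isOpen_cylinder_seqTop (x : ℕ → C) (n : ℕ) : IsOpen[seqTop C] (cylinder x n) := by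
  let _ : TopologicalSpace C := ⊥
  have : DiscreteTopology C := ⟨rfl⟩
  exact isOpen_cylinder _ x n

lemma exists_cylinder_subset_of_isOpen {U : Set (ℕ → C)} (hU : IsOpen[seqTop C] U) {x : ℕ → C}
    (hx : x ∈ U) : ∃ n, cylinder x n ⊆ U := by
  let _ : TopologicalSpace C := ⊥
  have : DiscreteTopology C := ⟨rfl⟩
  obtain ⟨_, ⟨y, n, rfl⟩, hxy, hyU⟩ :=
    (isTopologicalBasis_cylinders fun _ => C).exists_subset_of_mem_open hx hU
  exact ⟨n, mem_cylinder_iff_eq.1 hxy ▸ hyU⟩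

lemma cylinder_eq_of_mem_of_minimal {P : Set (ℕ → C) → Prop} {x y ρ : ℕ → C} {n m : ℕ}
    (hx : P (cylinder x n)) (hy : ∀ k < m, ¬ P (cylinder y k)) (hρx : ρ ∈ cylinder x n)
    (hρy : ρ ∈ cylinder y m) (hnm : n ≤ m) : cylinder x n = cylinder y m := by
  have hρy' : ρ ∈ cylinder y n := cylinder_anti y hnm hρy
  have hxy : cylinder x n = cylinder y n :=
    (mem_cylinder_iff_eq.1 hρx).symm.trans (mem_cylinder_iff_eq.1 hρy')
  obtain rfl : n = m := hnm.eq_of_not_lt fun h => hy n h (hxy ▸ hx)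
  exact hxy

lemma exists_pairwise_disjoint_cylinder_refinement {ι : Sort*} {U : ι → Set (ℕ → C)}
    (hU : ∀ j, IsOpen[seqTop C] (U j)) :
    ∃ (K : Type) (W : K → Set (ℕ → C)), (∀ k, IsOpen[seqTop C] (W k)) ∧
      (Pairwise fun k l => Disjoint (W k) (W l)) ∧ (∀ k, ∃ j, W k ⊆ U j) ∧
      ⋃ k, W k = ⋃ j, U j := by
  classical
  let good : Set (ℕ → C) → Prop := fun A => ∃ j, A ⊆ U j
  let minimal : Set (ℕ → C) → Prop := fun A =>
    ∃ x n, A = cylinder x n ∧ good (cylinder x n) ∧ ∀ k < n, ¬ good (cylinder x k)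
  refine ⟨{A // minimal A}, Subtype.val, ?_, ?_, fun A => ?_, ?_⟩
  · rintro ⟨_, x, n, rfl, -⟩
    exact isOpen_cylinder_seqTop x n
  · rintro ⟨_, x, n, rfl, hx, hxmin⟩ ⟨_, y, m, rfl, hy, hymin⟩ hne
    refine Set.disjoint_left.2 fun ρ hρx hρy => hne (Subtype.ext ?_)
    rcases le_total n m with hnm | hmn
    · exact cylinder_eq_of_mem_of_minimal hx hymin hρx hρy hnm
    · exact (cylinder_eq_of_mem_of_minimal hy hxmin hρy hρx hmn).symm
  · obtain ⟨x, n, hA, hgood, -⟩ := A.2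
    exact hA ▸ hgood
  · refine subset_antisymm (iUnion_subset fun A => ?_) fun ρ hρ => ?_
    · obtain ⟨x, n, hA, ⟨j, hj⟩, -⟩ := A.2
      rw [hA]
      exact hj.trans (subset_iUnion U j)
    · obtain ⟨j, hj⟩ := mem_iUnion.1 hρ
      have hex : ∃ n, good (cylinder ρ n) :=
        (exists_cylinder_subset_of_isOpen (hU j) hj).imp fun _ h => ⟨j, h⟩
      exact mem_iUnion.2 ⟨⟨_, ρ, Nat.find hex, rfl, Nat.find_spec hex,
        fun k hk => Nat.find_min hex hk⟩, self_mem_cylinder ρ _⟩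

end Cylinders

section Dclass

variable {C : Type}

lemma dclass_mono {θ' θ : Ordinal} (h : θ' ≤ θ) : Dclass C θ' ⊆ Dclass C θ := by
  rintro _ ⟨F, hFopen, -, rfl⟩
  obtain ⟨s, hlt, hpar⟩ := exists_parity_shift h
  let _ : TopologicalSpace (ℕ → C) := seqTop C
  let G : Ordinal → Set (ℕ → C) := fun η => ⋃ ξ, ⋃ (_ : ξ < θ' ∧ ξ + s ≤ η), F ξ
  have hG : ∀ ρ η, ρ ∈ G η ↔ ∃ ξ, (ξ < θ' ∧ ρ ∈ F ξ) ∧ ξ + s ≤ η := by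
    simp only [G, mem_iUnion, exists_prop]
    tauto
  refine ⟨G, fun η _ => isOpen_iUnion fun ξ => isOpen_iUnion fun hξ => hFopen ξ hξ.1,
    fun η₁ η₂ h₁₂ _ ρ hρ => ?_, ?_⟩
  · obtain ⟨ξ, hξ, hle⟩ := (hG ρ η₁).1 hρ
    exact (hG ρ η₂).2 ⟨ξ, hξ, hle.trans h₁₂⟩
  · ext ρ
    rw [mem_hDiffSet_iff (O := G)]
    simp only [HDiffSet, mem_ofPred_eq, hG]
    by_cases hex : ∃ ξ, ξ < θ' ∧ ρ ∈ F ξ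
    · rw [sInf_setOf_exists_add_le hex, hpar]
      obtain ⟨ξ, hξ, hρ⟩ := hex
      exact and_congr_left fun _ => iff_of_true ⟨ξ, hξ, hρ⟩ ⟨ξ + s, hlt ξ hξ, ξ, ⟨hξ, hρ⟩, le_rfl⟩
    · exact iff_of_false (fun ⟨⟨ξ, hξ, hρ⟩, _⟩ => hex ⟨ξ, hξ, hρ⟩)
        fun ⟨⟨_, _, ξ, hξρ, _⟩, _⟩ => hex ⟨ξ, hξρ⟩

lemma iUnion_mem_dclass {θ : Ordinal} {ι : Type*} {T O : ι → Set (ℕ → C)}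
    (hO : ∀ i, IsOpen[seqTop C] (O i)) (hdisj : Pairwise fun i j => Disjoint (O i) (O j))
    (hTO : ∀ i, T i ⊆ O i) (hT : ∀ i, T i ∈ Dclass C θ) : ⋃ i, T i ∈ Dclass C θ := by
  choose G hGopen hGmono hTG using hT
  let _ : TopologicalSpace (ℕ → C) := seqTop C
  refine ⟨fun η => ⋃ i, O i ∩ G i η,
    fun η hη => isOpen_iUnion fun i => (hO i).inter (hGopen i η hη),
    fun η₁ η₂ h₁₂ hη₂ => iUnion_mono fun i => inter_subset_inter_right _ (hGmono i η₁ η₂ h₁₂ hη₂),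
    ?_⟩
  ext ρ
  by_cases hρ : ∃ i, ρ ∈ O i
  · obtain ⟨i, hi⟩ := hρ
    have huniq : ∀ j, ρ ∈ O j → j = i := fun j hj =>
      by_contra fun hne => Set.disjoint_left.1 (hdisj hne) hj hi
    have hU : ∀ η, ρ ∈ ⋃ j, O j ∩ G j η ↔ ρ ∈ G i η := fun η => by
      simp only [mem_iUnion, mem_inter_iff]
      exact ⟨fun ⟨j, hj, hG⟩ => huniq j hj ▸ hG, fun h => ⟨i, hi, h⟩⟩
    have hT : ρ ∈ ⋃ j, T j ↔ ρ ∈ T i := by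
      simp only [mem_iUnion]
      exact ⟨fun ⟨j, hj⟩ => huniq j (hTO j hj) ▸ hj, fun h => ⟨i, h⟩⟩
    simp only [hT, hTG i, HDiffSet, mem_ofPred_eq, hU]
  · have hT : ρ ∉ ⋃ i, T i := fun h => by
      obtain ⟨i, hi⟩ := mem_iUnion.1 h
      exact hρ ⟨i, hTO i hi⟩
    have hU : ∀ η, ρ ∉ ⋃ i, O i ∩ G i η := fun η h => by
      obtain ⟨i, hi, -⟩ := mem_iUnion.1 h
      exact hρ ⟨i, hi⟩
    exact iff_of_false hT fun ⟨⟨η, _, h⟩, _⟩ => hU η h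

lemma Order.IsSuccLimit.exists_iUnion_of_mem_dclass {θ : Ordinal} (hθ : Order.IsSuccLimit θ)
    {S : Set (ℕ → C)} (hS : S ∈ Dclass C θ) :
    ∃ (I : Type) (T O : I → Set (ℕ → C)),
      (∀ i, IsOpen[seqTop C] (O i)) ∧ (Pairwise fun i j => Disjoint (O i) (O j)) ∧
      (∀ i, T i ⊆ O i) ∧ S = ⋃ i, T i ∧
      ∀ i, ∃ θi : Ordinal, θi ≠ 0 ∧ θi < θ ∧ T i ∈ Dclass C θi := by
  obtain ⟨O, hOopen, hOmono, rfl⟩ := hS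
  obtain ⟨K, W, hWopen, hWdisj, hWO, hWcover⟩ :=
    exists_pairwise_disjoint_cylinder_refinement (U := fun η : Iio θ => O η) fun η => hOopen η η.2
  let _ : TopologicalSpace (ℕ → C) := seqTop C
  refine ⟨K, fun k => HDiffSet θ O ∩ W k, W, hWopen, hWdisj, fun k => inter_subset_right, ?_,
    fun k => ?_⟩
  · rw [← inter_iUnion, hWcover, eq_comm, inter_eq_left]
    rintro ρ ⟨⟨η, hη, hρ⟩, -⟩
    exact mem_iUnion.2 ⟨⟨η, hη⟩, hρ⟩
  · obtain ⟨⟨η, hη⟩, hWη⟩ := hWO k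
    obtain ⟨θ', hθ'even, hηθ', hθ'θ⟩ := hθ.exists_ordEven_between hη
    refine ⟨θ', (bot_le.trans_lt hηθ').ne', hθ'θ, fun ξ => O ξ ∩ W k,
      fun ξ hξ => (hOopen ξ (hξ.trans hθ'θ)).inter (hWopen k),
      fun ξ₁ ξ₂ h₁₂ hξ₂ => inter_subset_inter_left _ (hOmono ξ₁ ξ₂ h₁₂ (hξ₂.trans hθ'θ)), ?_⟩
    exact hDiffSet_inter_eq hWη hηθ' hθ'θ.le (iff_of_true hθ'even hθ.ordEven)

end Dclass

/-- For a limit ordinal `θ`, a set belongs to `𝒟_θ` iff it is an open union of sets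
belonging to levels `𝒟_{θ_i}` with `θ_i` nonzero, `θ_i < θ`. -/
theorem statement19 (C : Type) (θ : Ordinal) (hθ : Order.IsSuccLimit θ) (S : Set (ℕ → C)) :
    S ∈ Dclass C θ ↔
      ∃ (I : Type) (T O : I → Set (ℕ → C)),
        (∀ i, IsOpen[seqTop C] (O i)) ∧ (Pairwise fun i j => Disjoint (O i) (O j)) ∧
        (∀ i, T i ⊆ O i) ∧ S = ⋃ i, T i ∧
        ∀ i, ∃ θi : Ordinal, θi ≠ 0 ∧ θi < θ ∧ T i ∈ Dclass C θi := by
  refine ⟨hθ.exists_iUnion_of_mem_dclass, ?_⟩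
  rintro ⟨I, T, O, hO, hdisj, hTO, rfl, hT⟩
  refine iUnion_mem_dclass hO hdisj hTO fun i => ?_
  obtain ⟨θi, -, hθi, hTi⟩ := hT i
  exact dclass_mono hθi.le hTi
end
end
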